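/- arXiv:1205.4155 — 2 statements merged into one kernel-verified Lean document; each statement's English description precedes it below -/
import Mathlib

section
/- For every natural number m, the set T_m of all continuous self-maps f of the Cantor space for which there exist a partition P of mesh < 1/m and a multiple q of m such that every component of Γ(f,P) is a balloon of type (q!,q!) which is strict relative to f, is an open and dense subset of the space of continuous self-maps of the Cantor space with the uniform metric. -/
noncomputable def cantorDist (σ τ : ℕ → Bool) : ℝ :=
  letI := Classical.propDecidable (∃ n, σ n ≠ τ n)
  if h : ∃ n, σ n ≠ τ n then 1 / (Nat.find h + 1) else 0

def IsPartition (P : Finset (Set (ℕ → Bool))) : Prop :=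
  (∀ a ∈ P, IsClopen a ∧ a.Nonempty) ∧
  (∀ a ∈ P, ∀ b ∈ P, a ≠ b → Disjoint a b) ∧
  ⋃₀ (P : Set (Set (ℕ → Bool))) = Set.univ

noncomputable def cantorDiam (A : Set (ℕ → Bool)) : ℝ :=
  sSup {r | ∃ σ ∈ A, ∃ τ ∈ A, r = cantorDist σ τ}

noncomputable def mesh (C : Set (Set (ℕ → Bool))) : ℝ :=
  sSup (cantorDiam '' C)

def gammaEdge (f : (ℕ → Bool) → (ℕ → Bool)) (a b : Set (ℕ → Bool)) : Prop :=
  (f '' a ∩ b).Nonempty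

def balloonEdge (s m : ℕ) (a b : Fin (s + m)) : Prop :=
  b.val = a.val + 1 ∨ (a.val = s + m - 1 ∧ b.val = s)

def dumbbellEdge (r s t : ℕ) (a b : Fin (r + s + t)) : Prop :=
  (b.val = a.val + 1 ∧ a.val + 1 ≠ r) ∨
  (a.val = r - 1 ∧ b.val = 0) ∨
  (a.val = 0 ∧ b.val = r) ∨
  (a.val = r + s + t - 1 ∧ b.val = r + s)

/-- Property (Q) of the paper, for a fixed `m`: there are a partition of mesh `< 1/m`
and a multiple `q` of `m` such that every component of `Γ(f,P)` is a balloon of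
type `(q!,q!)` which is strict relative to `f`. -/
def StrictBalloonsProp (m : ℕ) (f : (ℕ → Bool) → (ℕ → Bool)) : Prop :=
  ∃ P : Finset (Set (ℕ → Bool)), IsPartition P ∧
    mesh (↑P : Set (Set (ℕ → Bool))) < 1 / (m : ℝ) ∧
    ∃ q : ℕ, 0 < q ∧ m ∣ q ∧
      ∃ (k : ℕ) (e : {a // a ∈ P} ≃ Fin k × Fin (q.factorial + q.factorial)),
        (∀ a b : {a // a ∈ P}, gammaEdge f a.val b.val ↔
          ((e a).1 = (e b).1 ∧ balloonEdge q.factorial q.factorial (e a).2 (e b).2)) ∧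
        (∀ i : Fin k,
          (∀ j : ℕ, ∀ hj : j + 1 < q.factorial + q.factorial, j + 1 ≠ q.factorial →
            f '' (e.symm (i, ⟨j, by omega⟩)).val ⊂ (e.symm (i, ⟨j + 1, hj⟩)).val) ∧
          (f '' (e.symm (i, ⟨q.factorial - 1,
              by have := Nat.factorial_pos q; omega⟩)).val ∪
           f '' (e.symm (i, ⟨q.factorial + q.factorial - 1,
              by have := Nat.factorial_pos q; omega⟩)).val
            ⊂ (e.symm (i, ⟨q.factorial, by have := Nat.factorial_pos q; omega⟩)).val))

/-!
Openness: the cells of a partition are clopen and the images `f '' a` are compact, so both the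
graph `Γ(f, P)` and the strictness of the inclusions `f '' a ⊂ b` only depend on `f` up to a
finite precision, i.e. they persist for all `g` with `g σ` in a small cylinder around `f σ`.

Density: by uniform continuity, up to precision `N` the map `f` is read off on words of some
length `M ≥ m` as a self-map `T` of the finite set of such words. With `q = m * 2 ^ M`, every
orbit of `T` satisfies `T^[2 q!] = T^[q!]`. Cut the Cantor space into cells indexed by a starting
word `w` and a time `j < 2 q!`: a sequence is in cell `(w, j)` when it starts with `T^[j] w`
followed by a code of `(w, j)`. Sending each cell to one point of the next cell of the balloon
`0 → 1 → ⋯ → 2 q! - 1 → q!` gives a map close to `f` whose graph consists of strict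
`(q!, q!)`-balloons, and the cells have diameter at most `1 / (M + 1) < 1 / m`.
-/
open Set Filter PiNat Function

section Cylinders

variable {E : ℕ → Type*} [∀ n, TopologicalSpace (E n)] [∀ n, DiscreteTopology (E n)]
  [CompactSpace (∀ n, E n)]

theorem eventually_forall_mem_cylinder_eq {X : Type*} [TopologicalSpace X] [DiscreteTopology X]
    {φ : (∀ n, E n) → X} (hφ : Continuous φ) :
    ∀ᶠ n in atTop, ∀ x, ∀ y ∈ cylinder x n, φ y = φ x := by
  have hloc : ∀ x, ∃ n, cylinder x n ⊆ φ ⁻¹' {φ x} := by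
    intro x
    obtain ⟨_, ⟨y, n, rfl⟩, hx, hsub⟩ := (isTopologicalBasis_cylinders E).exists_subset_of_mem_open
      (mem_preimage.2 (mem_singleton (φ x))) ((isOpen_discrete _).preimage hφ)
    exact ⟨n, mem_cylinder_iff_eq.1 hx ▸ hsub⟩
  choose n hn using hloc
  obtain ⟨t, ht⟩ := isCompact_univ.elim_finite_subcover (fun x => cylinder x (n x))
    (fun x => isOpen_cylinder _ x (n x)) (fun x _ => mem_iUnion.2 ⟨x, self_mem_cylinder x (n x)⟩)
  refine eventually_atTop.2 ⟨t.sup n, fun N hN x y hy => ?_⟩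
  obtain ⟨z, hz, hxz⟩ := mem_iUnion₂.1 (ht (mem_univ x))
  have hyz : y ∈ cylinder z (n z) :=
    mem_cylinder_iff_eq.1 hxz ▸ cylinder_anti x ((Finset.le_sup hz).trans hN) hy
  exact (hn z hyz).trans (hn z hxz).symm

theorem Continuous.eventually_mapsTo_cylinder {E' : ℕ → Type*} [∀ n, TopologicalSpace (E' n)]
    [∀ n, DiscreteTopology (E' n)] {f : (∀ n, E n) → ∀ n, E' n} (hf : Continuous f) (N : ℕ) :
    ∀ᶠ M in atTop, ∀ x, MapsTo f (cylinder x M) (cylinder (f x) N) := by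
  have hφ : Continuous fun x (i : Fin N) => f x i :=
    continuous_pi fun i => (continuous_apply (i : ℕ)).comp hf
  filter_upwards [eventually_forall_mem_cylinder_eq hφ] with M hM x y hy
  exact mem_cylinder_iff.2 fun i hi => congr_fun (hM x y hy) ⟨i, hi⟩

theorem IsClopen.eventually_preimage_eq {X : Type*} {B : Set (∀ n, E n)} (hB : IsClopen B) :
    ∀ᶠ n in atTop, ∀ f g : X → ∀ n, E n, (∀ x, g x ∈ cylinder (f x) n) → g ⁻¹' B = f ⁻¹' B := by
  filter_upwards [eventually_forall_mem_cylinder_eq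
    ((continuous_boolIndicator_iff_isClopen B).2 hB)] with n hn f g hfg
  ext x
  change g x ∈ B ↔ f x ∈ B
  rw [mem_iff_boolIndicator, mem_iff_boolIndicator B (f x), hn (f x) (g x) (hfg x)]

/-- A point of `B` outside the compact set `f '' A` has a whole cylinder around it missing
`f '' A`. -/
theorem eventually_image_ssubset {X : Type*} {f : X → ∀ n, E n} {A : Set X}
    {B : Set (∀ n, E n)} (hA : IsClosed (f '' A)) (hB : IsClopen B) (h : f '' A ⊂ B) :
    ∀ᶠ n in atTop, ∀ g : X → ∀ n, E n, (∀ x, g x ∈ cylinder (f x) n) → g '' A ⊂ B := by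
  obtain ⟨τ, hτB, hτA⟩ := exists_of_ssubset h
  obtain ⟨n₀, hn₀⟩ := exists_disjoint_cylinder hA hτA
  filter_upwards [hB.eventually_preimage_eq (X := X), eventually_ge_atTop n₀] with n hpre hn g hg
  refine (ssubset_iff_of_subset ?_).2 ⟨τ, hτB, ?_⟩
  · rw [image_subset_iff, hpre f g hg, ← image_subset_iff]
    exact h.subset
  · rintro ⟨x, hx, rfl⟩
    exact hn₀.ne_of_mem (mem_image_of_mem f hx)
      (cylinder_anti _ hn ((mem_cylinder_comm _ _ _).1 (hg x))) rfl

end Cylinders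

section Words

variable {α : Type*}

theorem mem_cylinder_iff_comp_val_eq {x y : ℕ → α} {n : ℕ} :
    y ∈ cylinder x n ↔ y ∘ (Fin.val : Fin n → ℕ) = x ∘ Fin.val := by
  simp [mem_cylinder_iff, funext_iff, Fin.forall_iff]

def extendWord {n : ℕ} (u : Fin n → α) (a : α) : ℕ → α :=
  fun i => if h : i < n then u ⟨i, h⟩ else a

theorem extendWord_comp_val {n : ℕ} (u : Fin n → α) (a : α) :
    extendWord u a ∘ Fin.val = u :=
  funext fun i => dif_pos i.2

theorem extendWord_append_comp_val {m n : ℕ} (u : Fin m → α) (v : Fin n → α) (a : α) :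
    extendWord (Fin.append u v) a ∘ Fin.val = u := by
  funext i
  simp only [comp_apply, extendWord, dif_pos (Nat.lt_add_right n i.2)]
  exact Fin.append_left u v i

theorem extendWord_injective_right {n : ℕ} (u : Fin n → α) : Injective (extendWord u) :=
  fun a b h => by simpa [extendWord] using congr_fun h n

end Words

section CantorDist

theorem cantorDist_le_of_mem_cylinder {σ τ : ℕ → Bool} {n : ℕ} (h : σ ∈ cylinder τ n) :
    cantorDist σ τ ≤ 1 / (n + 1) := by
  unfold cantorDist
  split_ifs with hne
  · gcongr
    exact_mod_cast (Nat.le_find_iff hne n).2 fun i hi hi' => hi' (mem_cylinder_iff.1 h i hi)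
  · positivity

theorem mem_cylinder_of_cantorDist_lt {σ τ : ℕ → Bool} {n : ℕ} (h : cantorDist σ τ < 1 / n) :
    σ ∈ cylinder τ n := by
  refine mem_cylinder_iff.2 fun i hi => by_contra fun hne => h.not_ge ?_
  unfold cantorDist
  rw [dif_pos ⟨i, hne⟩]
  exact one_div_le_one_div_of_le (by positivity)
    (by exact_mod_cast Nat.succ_le_of_lt ((Nat.find_le hne).trans_lt hi))

theorem mesh_le_of_forall_mem_cylinder {C : Set (Set (ℕ → Bool))} {n : ℕ}
    (h : ∀ a ∈ C, ∀ σ ∈ a, ∀ τ ∈ a, σ ∈ cylinder τ n) : mesh C ≤ 1 / (n + 1) := by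
  refine Real.sSup_le ?_ (by positivity)
  rintro _ ⟨a, ha, rfl⟩
  refine Real.sSup_le ?_ (by positivity)
  rintro _ ⟨σ, hσ, τ, hτ, rfl⟩
  exact cantorDist_le_of_mem_cylinder (h a ha σ hσ τ hτ)

end CantorDist

theorem StrictBalloonsProp.eventually_of_mem_cylinder {m : ℕ} {f : (ℕ → Bool) → ℕ → Bool}
    (hf : Continuous f) (h : StrictBalloonsProp m f) :
    ∀ᶠ n in atTop, ∀ g : (ℕ → Bool) → ℕ → Bool, (∀ σ, g σ ∈ cylinder (f σ) n) →
      StrictBalloonsProp m g := by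
  obtain ⟨P, hP, hmesh, q, hq, hmq, k, e, hedge, hstrict⟩ := h
  have hclopen : ∀ a ∈ P, IsClopen a := fun a ha => (hP.1 a ha).1
  have himage : ∀ a ∈ P, IsClosed (f '' a) := fun a ha =>
    ((hclopen a ha).isClosed.isCompact.image hf).isClosed
  have hpre : ∀ᶠ n in atTop, ∀ b ∈ P, ∀ g : (ℕ → Bool) → ℕ → Bool,
      (∀ σ, g σ ∈ cylinder (f σ) n) → g ⁻¹' b = f ⁻¹' b :=
    (eventually_all_finset P).2 fun b hb => (hclopen b hb).eventually_preimage_eq.mono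
      fun n hn g hg => hn f g hg
  -- with `a' = a` this also covers the inclusions along the path and around the cycle
  have hssub : ∀ᶠ n in atTop, ∀ a ∈ P, ∀ a' ∈ P, ∀ b ∈ P, f '' (a ∪ a') ⊂ b →
      ∀ g : (ℕ → Bool) → ℕ → Bool, (∀ σ, g σ ∈ cylinder (f σ) n) → g '' (a ∪ a') ⊂ b := by
    simp only [eventually_all_finset]
    intro a ha a' ha' b hb
    by_cases hab : f '' (a ∪ a') ⊂ b
    · refine (eventually_image_ssubset ?_ (hclopen b hb) hab).mono fun n hn _ => hn
      rw [image_union]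
      exact (himage a ha).union (himage a' ha')
    · exact Eventually.of_forall fun _ h => absurd h hab
  filter_upwards [hpre, hssub] with n hpre hssub g hg
  refine ⟨P, hP, hmesh, q, hq, hmq, k, e, fun a b => ?_, fun i => ⟨fun j hj hne => ?_, ?_⟩⟩
  · rw [← hedge, gammaEdge, gammaEdge, image_inter_nonempty_iff, image_inter_nonempty_iff,
      hpre b b.2 g hg]
  · have := hssub _ (e.symm _).2 _ (e.symm _).2 _ (e.symm _).2
      (by rw [union_self]; exact (hstrict i).1 j hj hne) g hg
    rwa [union_self] at this
  · have := (hstrict i).2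
    rw [← image_union] at this ⊢
    exact hssub _ (e.symm _).2 _ (e.symm _).2 _ (e.symm _).2 this g hg

theorem Function.iterate_mem_periodicPts_of_card_le {α : Type*} [Fintype α] (f : α → α) (x : α)
    {n : ℕ} (hn : Fintype.card α ≤ n) : f^[n] x ∈ periodicPts f := by
  have key : ∀ a b : ℕ, a < b → b ≤ Fintype.card α → f^[a] x = f^[b] x →
      f^[n] x ∈ periodicPts f := by
    intro a b hab hb heq
    have hper : IsPeriodicPt f (b - a) (f^[a] x) := by
      rw [IsPeriodicPt, IsFixedPt, ← iterate_add_apply, Nat.sub_add_cancel hab.le, heq]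
    have := hper.apply_iterate (n - a)
    rw [← iterate_add_apply, Nat.sub_add_cancel (by omega)] at this
    exact mk_mem_periodicPts (by omega) this
  obtain ⟨a, b, hne, heq⟩ := Fintype.exists_ne_map_eq_of_card_lt
    (fun t : Fin (Fintype.card α + 1) => f^[t] x) (by simp)
  rcases Fin.lt_or_lt_of_ne hne with h | h
  · exact key a b h (Nat.lt_succ_iff.1 b.2) heq
  · exact key b a h (Nat.lt_succ_iff.1 a.2) heq.symm

theorem Function.iterate_factorial_add_factorial {α : Type*} [Fintype α] (f : α → α) (x : α)
    {q : ℕ} (hq : Fintype.card α ≤ q) : f^[q.factorial + q.factorial] x = f^[q.factorial] x := by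
  have := (isPeriodicPt_factorial_card_of_mem_periodicPts (iterate_mem_periodicPts_of_card_le f x
    (hq.trans q.self_le_factorial))).trans_dvd (Nat.factorial_dvd_factorial hq)
  rwa [IsPeriodicPt, IsFixedPt, ← iterate_add_apply] at this

section BalloonSucc

variable {s t : ℕ} [NeZero t]

def balloonSucc (j : Fin (s + t)) : Fin (s + t) :=
  if h : j.val + 1 < s + t then ⟨j.val + 1, h⟩ else ⟨s, by have := NeZero.pos t; omega⟩

theorem balloonSucc_val (j : Fin (s + t)) :
    (balloonSucc j).val = if j.val + 1 < s + t then j.val + 1 else s := by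
  unfold balloonSucc
  split_ifs <;> rfl

theorem balloonEdge_iff_eq_balloonSucc {a b : Fin (s + t)} :
    balloonEdge s t a b ↔ b = balloonSucc a := by
  rw [balloonEdge, Fin.ext_iff, balloonSucc_val]
  have := a.2
  split_ifs <;> omega

theorem iterate_balloonSucc {α : Type*} {T : α → α} (hT : ∀ x, T^[s + t] x = T^[s] x)
    (j : Fin (s + t)) (x : α) : T^[balloonSucc j] x = T (T^[j] x) := by
  rw [← iterate_succ_apply' T (j : ℕ) x, balloonSucc_val]
  split_ifs with h
  · rfl
  · rw [show j.val.succ = s + t by have := j.2; omega, hT]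

end BalloonSucc

section BalloonLift

variable {M L F : ℕ} [NeZero F] (T : (Fin M → Bool) → Fin M → Bool)
  (ι : (Fin M → Bool) × Fin (F + F) ↪ (Fin L → Bool))

def balloonCode (c : (Fin M → Bool) × Fin (F + F)) : Fin (M + L) → Bool :=
  Fin.append (T^[c.2] c.1) (ι c)

/-- Index `0` collects every sequence that does not carry a valid code, so that the cells cover
the Cantor space. -/
noncomputable def balloonDecode (x : Fin (M + L) → Bool) : (Fin M → Bool) × Fin (F + F) :=
  let u : Fin M → Bool := fun i => x (Fin.castAdd L i)
  let v : Fin L → Bool := fun i => x (Fin.natAdd M i)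
  let c := invFun ι v
  if ι c = v ∧ c.2 ≠ 0 ∧ u = T^[c.2] c.1 then c else (u, 0)

theorem balloonDecode_balloonCode (c : (Fin M → Bool) × Fin (F + F)) :
    balloonDecode T ι (balloonCode T ι c) = c := by
  simp only [balloonDecode, balloonCode, Fin.append_left, Fin.append_right]
  rw [leftInverse_invFun ι.injective c]
  by_cases hc : c.2 = 0
  · simp [hc, Prod.ext_iff]
  · simp [hc]

theorem balloonDecode_spec (x : Fin (M + L) → Bool) :
    (fun i => x (Fin.castAdd L i)) = T^[(balloonDecode T ι x).2] (balloonDecode T ι x).1 := by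
  dsimp only [balloonDecode]
  split_ifs with h
  · exact h.2.2
  · simp

noncomputable def balloonIndex (σ : ℕ → Bool) : (Fin M → Bool) × Fin (F + F) :=
  balloonDecode T ι (σ ∘ Fin.val)

def balloonPoint (c : (Fin M → Bool) × Fin (F + F)) (b : Bool) : ℕ → Bool :=
  extendWord (balloonCode T ι c) b

noncomputable def balloonMap (σ : ℕ → Bool) : ℕ → Bool :=
  balloonPoint T ι ((balloonIndex T ι σ).1, balloonSucc (balloonIndex T ι σ).2) false

theorem continuous_balloonIndex : Continuous (balloonIndex T ι) :=
  continuous_of_discreteTopology.comp (continuous_pi fun i => continuous_apply (i : ℕ))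

theorem continuous_balloonMap : Continuous (balloonMap T ι) :=
  (continuous_of_discreteTopology (f := fun c : (Fin M → Bool) × Fin (F + F) =>
    balloonPoint T ι (c.1, balloonSucc c.2) false)).comp (continuous_balloonIndex T ι)

theorem balloonIndex_balloonPoint (c : (Fin M → Bool) × Fin (F + F)) (b : Bool) :
    balloonIndex T ι (balloonPoint T ι c b) = c := by
  rw [balloonIndex, balloonPoint, extendWord_comp_val, balloonDecode_balloonCode]

theorem balloonPoint_mem_fiber (c : (Fin M → Bool) × Fin (F + F)) (b : Bool) :
    balloonPoint T ι c b ∈ balloonIndex T ι ⁻¹' {c} :=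
  balloonIndex_balloonPoint T ι c b

theorem comp_val_eq_iterate_balloonIndex (σ : ℕ → Bool) :
    σ ∘ (Fin.val : Fin M → ℕ) = T^[(balloonIndex T ι σ).2] (balloonIndex T ι σ).1 :=
  balloonDecode_spec T ι (σ ∘ Fin.val)

theorem balloonMap_comp_val (hT : ∀ w, T^[F + F] w = T^[F] w) (σ : ℕ → Bool) :
    balloonMap T ι σ ∘ (Fin.val : Fin M → ℕ) = T (σ ∘ Fin.val) := by
  rw [comp_val_eq_iterate_balloonIndex T ι σ, ← iterate_balloonSucc hT, balloonMap, balloonPoint,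
    balloonCode, extendWord_append_comp_val]

theorem balloonMap_image_fiber (c : (Fin M → Bool) × Fin (F + F)) :
    balloonMap T ι '' (balloonIndex T ι ⁻¹' {c}) =
      {balloonPoint T ι (c.1, balloonSucc c.2) false} := by
  refine eq_singleton_iff_unique_mem.2 ⟨⟨balloonPoint T ι c false,
    balloonIndex_balloonPoint T ι c false, by rw [balloonMap, balloonIndex_balloonPoint]⟩, ?_⟩
  rintro _ ⟨σ, hσ, rfl⟩
  rw [balloonMap, mem_preimage.1 hσ]

theorem gammaEdge_balloonMap_fiber_iff (c c' : (Fin M → Bool) × Fin (F + F)) :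
    gammaEdge (balloonMap T ι) (balloonIndex T ι ⁻¹' {c}) (balloonIndex T ι ⁻¹' {c'}) ↔
      c' = (c.1, balloonSucc c.2) := by
  rw [gammaEdge, balloonMap_image_fiber, singleton_inter_nonempty, mem_preimage,
    balloonIndex_balloonPoint, mem_singleton_iff, eq_comm]

theorem singleton_balloonPoint_ssubset_fiber (c : (Fin M → Bool) × Fin (F + F)) :
    {balloonPoint T ι c false} ⊂ balloonIndex T ι ⁻¹' {c} := by
  refine (ssubset_iff_of_subset (singleton_subset_iff.2 (balloonPoint_mem_fiber T ι c false))).2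
    ⟨balloonPoint T ι c true, balloonPoint_mem_fiber T ι c true, fun h => ?_⟩
  exact Bool.false_ne_true (extendWord_injective_right _ (mem_singleton_iff.1 h).symm)

theorem isPartition_balloonIndex_fibers :
    IsPartition (Finset.univ.image fun c => balloonIndex T ι ⁻¹' {c}) := by
  simp only [IsPartition, Finset.mem_image, Finset.mem_univ, true_and, forall_exists_index,
    forall_apply_eq_imp_iff, Finset.coe_image, Finset.coe_univ, image_univ]
  refine ⟨fun c => ⟨(isClopen_discrete {c}).preimage (continuous_balloonIndex T ι),
    _, balloonPoint_mem_fiber T ι c false⟩, fun c c' hne => ?_, ?_⟩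
  · exact (disjoint_singleton.2 fun h => hne (by rw [h])).preimage _
  · exact sUnion_eq_univ_iff.2 fun σ => ⟨_, ⟨balloonIndex T ι σ, rfl⟩, rfl⟩

theorem mesh_balloonIndex_fibers_le :
    mesh (↑(Finset.univ.image fun c => balloonIndex T ι ⁻¹' {c}) : Set (Set (ℕ → Bool))) ≤
      1 / ((M : ℝ) + 1) := by
  refine mesh_le_of_forall_mem_cylinder ?_
  simp only [Finset.coe_image, Finset.coe_univ, image_univ, forall_mem_range]
  intro c σ hσ τ hτ
  rw [mem_cylinder_iff_comp_val_eq, comp_val_eq_iterate_balloonIndex T ι σ,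
    comp_val_eq_iterate_balloonIndex T ι τ, mem_preimage.1 hσ, mem_preimage.1 hτ]

end BalloonLift

theorem exists_strictBalloonsProp_lift {m M q : ℕ} (hm : 0 < m) (hq : 0 < q) (hmq : m ∣ q)
    (hmM : m ≤ M) (T : (Fin M → Bool) → Fin M → Bool)
    (hT : ∀ w, T^[q.factorial + q.factorial] w = T^[q.factorial] w) :
    ∃ g : (ℕ → Bool) → ℕ → Bool, Continuous g ∧ StrictBalloonsProp m g ∧
      ∀ σ, g σ ∘ (Fin.val : Fin M → ℕ) = T (σ ∘ Fin.val) := by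
  have hF : 0 < q.factorial := q.factorial_pos
  have : NeZero q.factorial := ⟨hF.ne'⟩
  set C := (Fin M → Bool) × Fin (q.factorial + q.factorial)
  -- any injective code of the cell indices will do; `card C < 2 ^ card C` provides one
  obtain ⟨ι⟩ := Function.Embedding.nonempty_of_card_le (α := C)
    (β := Fin (Fintype.card C) → Bool) (by simpa using Nat.lt_two_pow_self.le)
  set fiber : C → Set (ℕ → Bool) := fun c => balloonIndex T ι ⁻¹' {c}
  set P := Finset.univ.image fiber
  have hfiber : Injective fiber :=
    (preimage_injective.2 fun c => ⟨_, balloonIndex_balloonPoint T ι c false⟩).comp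
      singleton_injective
  let E : C ≃ {a // a ∈ P} :=
    Equiv.ofBijective (fun c => ⟨fiber c, Finset.mem_image_of_mem _ (Finset.mem_univ c)⟩)
    ⟨fun c c' h => hfiber (congrArg Subtype.val h), fun ⟨a, ha⟩ => by
      obtain ⟨c, -, rfl⟩ := Finset.mem_image.1 ha
      exact ⟨c, rfl⟩⟩
  let e := E.symm.trans ((Fintype.equivFin _).prodCongr (Equiv.refl _))
  have he : ∀ i j, (e.symm (i, j)).val = fiber ((Fintype.equivFin _).symm i, j) := fun _ _ => rfl
  have hmesh : mesh (↑P : Set (Set (ℕ → Bool))) < 1 / (m : ℝ) := by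
    refine (mesh_balloonIndex_fibers_le T ι).trans_lt ?_
    gcongr
    exact_mod_cast Nat.lt_succ_of_le hmM
  refine ⟨balloonMap T ι, continuous_balloonMap T ι, ⟨P, isPartition_balloonIndex_fibers T ι,
    hmesh, q, hq, hmq, _, e, fun a b => ?_, fun i => ⟨fun j hj hne => ?_, ?_⟩⟩,
    balloonMap_comp_val T ι hT⟩
  · obtain ⟨x, rfl⟩ := e.symm.surjective a
    obtain ⟨y, rfl⟩ := e.symm.surjective b
    rw [he, he, gammaEdge_balloonMap_fiber_iff, e.apply_symm_apply, e.apply_symm_apply,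
      balloonEdge_iff_eq_balloonSucc, Prod.ext_iff, (Fintype.equivFin _).symm.injective.eq_iff,
      eq_comm (a := y.1)]
  · have hsucc : balloonSucc (⟨j, by omega⟩ : Fin (q.factorial + q.factorial)) = ⟨j + 1, hj⟩ :=
      Fin.ext (by simp [balloonSucc_val, hj])
    rw [he, he, balloonMap_image_fiber]
    simp only [hsucc]
    exact singleton_balloonPoint_ssubset_fiber T ι _
  · have hsucc : ∀ j : Fin (q.factorial + q.factorial),
        j.val = q.factorial - 1 ∨ j.val = q.factorial + q.factorial - 1 →
        balloonSucc j = ⟨q.factorial, by omega⟩ := fun j hj =>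
      Fin.ext (by rw [balloonSucc_val]; dsimp only; split_ifs <;> omega)
    rw [he, he, he, balloonMap_image_fiber, balloonMap_image_fiber]
    rw [hsucc ⟨_, by omega⟩ (Or.inl rfl), hsucc ⟨_, by omega⟩ (Or.inr rfl), union_self]
    exact singleton_balloonPoint_ssubset_fiber T ι _

theorem exists_strictBalloonsProp_mem_cylinder {m : ℕ} (hm : 0 < m) {f : (ℕ → Bool) → ℕ → Bool}
    (hf : Continuous f) (N : ℕ) :
    ∃ g : (ℕ → Bool) → ℕ → Bool, Continuous g ∧ StrictBalloonsProp m g ∧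
      ∀ σ, g σ ∈ cylinder (f σ) N := by
  obtain ⟨M, hM, hmM⟩ := ((hf.eventually_mapsTo_cylinder N).and
    (eventually_ge_atTop (max m N))).exists
  let T : (Fin M → Bool) → Fin M → Bool := fun u => f (extendWord u false) ∘ Fin.val
  have hT : ∀ w,
      T^[(m * 2 ^ M).factorial + (m * 2 ^ M).factorial] w = T^[(m * 2 ^ M).factorial] w :=
    fun w => iterate_factorial_add_factorial T w (by simpa using Nat.le_mul_of_pos_left (2 ^ M) hm)
  obtain ⟨g, hg, hgm, hgT⟩ := exists_strictBalloonsProp_lift hm (by positivity)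
    (dvd_mul_right m _) (le_of_max_le_left hmM) T hT
  refine ⟨g, hg, hgm, fun σ => ?_⟩
  have hσ : extendWord (σ ∘ Fin.val) false ∈ cylinder σ M :=
    mem_cylinder_iff_comp_val_eq.2 (extendWord_comp_val _ _)
  have hgσ : g σ ∈ cylinder (f (extendWord (σ ∘ Fin.val) false)) N :=
    cylinder_anti _ (le_of_max_le_right hmM) (mem_cylinder_iff_comp_val_eq.2 (hgT σ))
  exact mem_cylinder_iff_eq.2 ((mem_cylinder_iff_eq.1 hgσ).trans (mem_cylinder_iff_eq.1 (hM σ hσ)))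

theorem Tm_open_and_dense (m : ℕ) (hm : 0 < m) :
    (∀ f : (ℕ → Bool) → (ℕ → Bool), Continuous f → StrictBalloonsProp m f →
      ∃ ε : ℝ, 0 < ε ∧ ∀ g : (ℕ → Bool) → (ℕ → Bool), Continuous g →
        (∀ σ, cantorDist (g σ) (f σ) < ε) → StrictBalloonsProp m g) ∧
    (∀ f : (ℕ → Bool) → (ℕ → Bool), Continuous f → ∀ ε : ℝ, 0 < ε →
      ∃ g : (ℕ → Bool) → (ℕ → Bool), Continuous g ∧ StrictBalloonsProp m g ∧
        ∀ σ, cantorDist (g σ) (f σ) < ε) := by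
  refine ⟨fun f hf hfm => ?_, fun f hf ε hε => ?_⟩
  · obtain ⟨n, hn, hn0⟩ := ((hfm.eventually_of_mem_cylinder hf).and (eventually_gt_atTop 0)).exists
    exact ⟨1 / n, by positivity, fun g _ hg => hn g fun σ => mem_cylinder_of_cantorDist_lt (hg σ)⟩
  · obtain ⟨N, hN⟩ := exists_nat_one_div_lt hε
    obtain ⟨g, hg, hgm, hfg⟩ := exists_strictBalloonsProp_mem_cylinder hm hf N
    exact ⟨g, hg, hgm, fun σ => (cantorDist_le_of_mem_cylinder (hfg σ)).trans_lt hN⟩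
end

section
/- Let f be a continuous self-map of a compact metric space X that is chain continuous at every point. Then every chain recurrent point of f is recurrent; hence R(f) = Ω(f) = CR(f). -/
/-- `x` is a recurrent point of `f`: `x ∈ ω(x,f)`. -/
def RecurrentPt {X : Type*} [MetricSpace X] (f : X → X) (x : X) : Prop :=
  ∀ ε : ℝ, 0 < ε → ∀ N : ℕ, ∃ n : ℕ, N ≤ n ∧ dist (f^[n] x) x < ε

/-- `x` is a nonwandering point of `f`. -/
def NonwanderingPt {X : Type*} [MetricSpace X] (f : X → X) (x : X) : Prop :=
  ∀ ε : ℝ, 0 < ε → ∃ n : ℕ, 1 ≤ n ∧ ∃ y : X, dist y x < ε ∧ dist (f^[n] y) x < ε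

/-- `x` is a chain recurrent point of `f`. -/
def ChainRecurrentPt {X : Type*} [MetricSpace X] (f : X → X) (x : X) : Prop :=
  ∀ δ : ℝ, 0 < δ → ∃ k : ℕ, 1 ≤ k ∧ ∃ c : ℕ → X, c 0 = x ∧ c k = x ∧
    ∀ i < k, dist (f (c i)) (c (i + 1)) ≤ δ

/-- `f` is chain continuous at `x`. -/
def ChainContinuousAt {X : Type*} [MetricSpace X] (f : X → X) (x : X) : Prop :=
  ∀ ε : ℝ, 0 < ε → ∃ δ : ℝ, 0 < δ ∧
    ∀ xs : ℕ → X, dist (xs 0) x < δ → (∀ n : ℕ, dist (xs (n + 1)) (f (xs n)) < δ) →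
      ∀ n : ℕ, dist (xs n) (f^[n] x) < ε

/-!
Repeating a closed `δ`-chain through `x` forever gives a `δ`-pseudo-orbit that returns to `x` at
every multiple of the chain's length `k`. Chain continuity at `x` makes the true orbit shadow this
pseudo-orbit, so `f^[m k] x` stays close to `x` for all `m`, i.e. `x` is recurrent. Together with
the general inclusions `R(f) ⊆ Ω(f) ⊆ CR(f)` this gives equality of the three sets.
-/

lemma apply_add_one_mod_of_apply_eq {α : Type*} {c : ℕ → α} {k : ℕ} (hc : c k = c 0) (n : ℕ) :
    c ((n + 1) % k) = c (n % k + 1) := by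
  rcases Nat.eq_zero_or_pos k with rfl | hk
  · simp only [Nat.mod_zero]
  have hmod : (n + 1) % k = (n % k + 1) % k := (Nat.mod_add_mod n k 1).symm
  rcases (Nat.add_one_le_of_lt (Nat.mod_lt n hk)).lt_or_eq with hlt | heq
  · rw [hmod, Nat.mod_eq_of_lt hlt]
  · rw [hmod, heq, Nat.mod_self, hc]

section

variable {X : Type*} [MetricSpace X] {f : X → X} {x : X}

theorem ChainRecurrentPt.recurrentPt (hcc : ChainContinuousAt f x) (hx : ChainRecurrentPt f x) :
    RecurrentPt f x := by
  intro ε hε N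
  obtain ⟨δ, hδ, hshadow⟩ := hcc ε hε
  obtain ⟨k, hk, c, hc0, hck, hchain⟩ := hx (δ / 2) (half_pos hδ)
  have hstep : ∀ n, dist (c ((n + 1) % k)) (f (c (n % k))) < δ := fun n => by
    rw [apply_add_one_mod_of_apply_eq (hck.trans hc0.symm), dist_comm]
    exact (hchain _ (Nat.mod_lt n hk)).trans_lt (half_lt_self hδ)
  have hclose := hshadow (fun n => c (n % k)) (by simpa [hc0] using hδ) hstep (N * k)
  refine ⟨N * k, Nat.le_mul_of_pos_right N hk, ?_⟩
  simpa [Nat.mul_mod_left, hc0, dist_comm] using hclose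

theorem RecurrentPt.nonwanderingPt (hx : RecurrentPt f x) : NonwanderingPt f x := fun ε hε =>
  let ⟨n, hn, hclose⟩ := hx ε hε 1
  ⟨n, hn, x, by simpa using hε, hclose⟩

theorem NonwanderingPt.chainRecurrentPt (hf : ContinuousAt f x) (hx : NonwanderingPt f x) :
    ChainRecurrentPt f x := by
  intro δ hδ
  obtain ⟨η, hη, hcont⟩ := Metric.continuousAt_iff.mp hf (δ / 2) (half_pos hδ)
  obtain ⟨n, hn, y, hyx, hnyx⟩ := hx (min η (δ / 2)) (lt_min hη (half_pos hδ))
  have hfy : dist (f y) (f x) < δ / 2 := hcont (hyx.trans_le (min_le_left _ _))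
  have hny : dist (f^[n] y) x < δ / 2 := hnyx.trans_le (min_le_right _ _)
  -- the chain `x, f y, f^[2] y, …, f^[n-1] y, x`: only the first and last jumps are nonzero
  refine ⟨n, hn, fun i => if i = 0 ∨ n ≤ i then x else f^[i] y, by simp, by simp, ?_⟩
  intro i hi
  rcases Nat.eq_zero_or_pos i with rfl | hi0
  · by_cases hn1 : n ≤ 1
    · obtain rfl : n = 1 := le_antisymm hn1 hn
      simp only [true_or, le_refl, or_true, if_true]
      calc dist (f x) x ≤ dist (f x) (f y) + dist (f y) x := dist_triangle _ _ _
        _ ≤ δ := by rw [dist_comm] at hfy; simp only [Function.iterate_one] at hny; linarith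
    · simp only [true_or, if_true, if_neg (show ¬(1 = 0 ∨ n ≤ 1) by omega),
        zero_add, Function.iterate_one, dist_comm (f x)]
      linarith
  · simp only [if_neg (show ¬(i = 0 ∨ n ≤ i) by omega), ← Function.iterate_succ_apply' f i y]
    rcases (Nat.succ_le_of_lt hi).lt_or_eq with hlt | heq
    · simp only [if_neg (show ¬(i + 1 = 0 ∨ n ≤ i + 1) by omega), dist_self, hδ.le]
    · obtain rfl := heq
      simpa using hny.le.trans (half_le_self hδ.le)

end

theorem chain_continuous_implies_CR_eq_R_general {X : Type*} [MetricSpace X]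
    (f : X → X) (hf : Continuous f) (hcc : ∀ x : X, ChainContinuousAt f x) :
    (∀ x : X, ChainRecurrentPt f x → RecurrentPt f x) ∧
    {x : X | RecurrentPt f x} = {x : X | NonwanderingPt f x} ∧
    {x : X | NonwanderingPt f x} = {x : X | ChainRecurrentPt f x} := by
  have hCR : ∀ x, ChainRecurrentPt f x → RecurrentPt f x := fun x =>
    ChainRecurrentPt.recurrentPt (hcc x)
  have hNW : ∀ x, NonwanderingPt f x → ChainRecurrentPt f x := fun _ =>
    NonwanderingPt.chainRecurrentPt hf.continuousAt
  refine ⟨hCR, ?_, ?_⟩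
  · exact Set.ext fun x => ⟨RecurrentPt.nonwanderingPt, fun hx => hCR x (hNW x hx)⟩
  · exact Set.ext fun x => ⟨hNW x, fun hx => (hCR x hx).nonwanderingPt⟩

theorem chain_continuous_implies_CR_eq_R {X : Type*} [MetricSpace X] [CompactSpace X]
    (f : X → X) (hf : Continuous f) (hcc : ∀ x : X, ChainContinuousAt f x) :
    (∀ x : X, ChainRecurrentPt f x → RecurrentPt f x) ∧
    {x : X | RecurrentPt f x} = {x : X | NonwanderingPt f x} ∧
    {x : X | NonwanderingPt f x} = {x : X | ChainRecurrentPt f x} :=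
  chain_continuous_implies_CR_eq_R_general f hf hcc
end
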